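/- arXiv:2511.03672 — 4 statements merged into one kernel-verified Lean document; each statement's English description precedes it below -/
import Mathlib

section
/- Let δ ≥ 0 and let X be a δ-hyperbolic geodesic metric space. If c₁, c₂ : [0,∞) → X are asymptotic geodesic rays, then d(c₁(t), c₂(t)) ≤ 19δ + 3·d(c₁(0), c₂(0)) for all t ≥ 0. -/
/-- A geodesic segment: an isometric map `c : [0,T] → X`. -/
def IsGeodesicSegment {X : Type*} [MetricSpace X] (c : ℝ → X) (T : ℝ) : Prop :=
  ∀ s ∈ Set.Icc (0:ℝ) T, ∀ t ∈ Set.Icc (0:ℝ) T, dist (c s) (c t) = |s - t|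

/-- A geodesic ray: an isometric map `c : [0,∞) → X`. -/
def IsGeodesicRay {X : Type*} [MetricSpace X] (c : ℝ → X) : Prop :=
  ∀ s t : ℝ, 0 ≤ s → 0 ≤ t → dist (c s) (c t) = |s - t|

/-- Two geodesic rays are asymptotic if they stay at bounded distance. -/
def AsymptoticRays {X : Type*} [MetricSpace X] (c₁ c₂ : ℝ → X) : Prop :=
  ∃ B : ℝ, ∀ t : ℝ, 0 ≤ t → dist (c₁ t) (c₂ t) ≤ B

/-- A geodesic metric space: every pair of points is joined by a geodesic segment. -/
def IsGeodesicSpace (X : Type*) [MetricSpace X] : Prop :=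
  ∀ x y : X, ∃ c : ℝ → X, IsGeodesicSegment c (dist x y) ∧ c 0 = x ∧ c (dist x y) = y

/-- `δ`-hyperbolicity: every geodesic triangle is `δ`-thin. -/
def DeltaHyperbolic (X : Type*) [MetricSpace X] (δ : ℝ) : Prop :=
  ∀ (c₀ c₁ c₂ : ℝ → X) (T₀ T₁ T₂ : ℝ),
    0 ≤ T₀ → 0 ≤ T₁ → 0 ≤ T₂ →
    IsGeodesicSegment c₀ T₀ → IsGeodesicSegment c₁ T₁ → IsGeodesicSegment c₂ T₂ →
    c₀ T₀ = c₁ 0 → c₁ T₁ = c₂ 0 → c₂ T₂ = c₀ 0 →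
    ∀ t ∈ Set.Icc (0:ℝ) T₀,
      ∃ p ∈ (c₁ '' Set.Icc (0:ℝ) T₁) ∪ (c₂ '' Set.Icc (0:ℝ) T₂), dist (c₀ t) p ≤ δ


lemma reverse_segment {X : Type*} [MetricSpace X] {c : ℝ → X} {T : ℝ}
    (h : IsGeodesicSegment c T) : IsGeodesicSegment (fun r => c (T - r)) T := by
  intro a ha b hb
  have h' := h (T - a) ⟨by linarith [ha.2], by linarith [ha.1]⟩
      (T - b) ⟨by linarith [hb.2], by linarith [hb.1]⟩
  simp only at h' ⊢
  rw [h', show T - a - (T - b) = b - a by ring, abs_sub_comm]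

theorem asymptotic_rays_dist_le
    {X : Type*} [MetricSpace X] (δ : ℝ) (hδ : 0 ≤ δ)
    (hgeo : IsGeodesicSpace X) (hhyp : DeltaHyperbolic X δ)
    (c₁ c₂ : ℝ → X) (h₁ : IsGeodesicRay c₁) (h₂ : IsGeodesicRay c₂)
    (hasym : AsymptoticRays c₁ c₂) :
    ∀ t : ℝ, 0 ≤ t → dist (c₁ t) (c₂ t) ≤ 19 * δ + 3 * dist (c₁ 0) (c₂ 0)  := by
  intro t ht
  obtain ⟨B, hB⟩ := hasym
  have hB0 : 0 ≤ B := le_trans dist_nonneg (hB 0 le_rfl)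
  set d₀ := dist (c₁ 0) (c₂ 0) with hd₀
  have hd₀0 : 0 ≤ d₀ := dist_nonneg
  set s := t + B + δ + 1 with hs
  have hts : t ≤ s := by simp only [hs]; linarith
  have hs0 : 0 ≤ s := le_trans ht hts
  obtain ⟨σ, hσ, hσ0, hσD⟩ := hgeo (c₁ 0) (c₂ s)
  set D := dist (c₁ 0) (c₂ s) with hD
  have hD0 : 0 ≤ D := dist_nonneg
  obtain ⟨σ₁, hσ₁, hσ₁0, hσ₁D⟩ := hgeo (c₁ s) (c₂ s)
  set D₁ := dist (c₁ s) (c₂ s) with hD₁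
  have hD₁0 : 0 ≤ D₁ := dist_nonneg
  have hD₁B : D₁ ≤ B := hB s hs0
  -- Triangle 1 : c₁ 0 → c₁ s → c₂ s → c₁ 0
  obtain ⟨p, hp, hpd⟩ := hhyp c₁ σ₁ (fun r => σ (D - r)) s D₁ D hs0 hD₁0 hD0
      (fun a ha b hb => h₁ a b ha.1 hb.1) hσ₁ (reverse_segment hσ)
      hσ₁0.symm (by simp only [sub_zero]; rw [hσ₁D, hσD])
      (by simp only [sub_self]; rw [hσ0]) t ⟨ht, hts⟩
  rcases hp with ⟨r, hr, rfl⟩ | ⟨r, hr, rfl⟩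
  · -- impossible: p on far side
    exfalso
    have h1 : dist (c₁ t) (c₁ s) = s - t := by
      rw [h₁ t s ht hs0, abs_of_nonpos (by linarith), neg_sub]
    have h2 : dist (c₁ s) (σ₁ r) = r := by
      rw [← hσ₁0, hσ₁ 0 ⟨le_rfl, hD₁0⟩ r hr, abs_sub_comm, abs_of_nonneg (by simpa using hr.1), sub_zero]
    have h3 := dist_triangle (c₁ t) (σ₁ r) (c₁ s)
    rw [dist_comm (σ₁ r) (c₁ s)] at h3
    have hr2 := hr.2
    simp only [hs] at h1
    linarith
  · -- p = σ (D - r)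
    set r' := D - r with hr'def
    have hr'mem : r' ∈ Set.Icc (0:ℝ) D := ⟨by linarith [hr.2], by linarith [hr.1]⟩
    obtain ⟨τ, hτ, hτ0, hτD⟩ := hgeo (c₂ 0) (c₁ 0)
    set Dτ := dist (c₂ 0) (c₁ 0) with hDτ
    have hDτd : Dτ = d₀ := dist_comm _ _
    have hDτ0 : 0 ≤ Dτ := dist_nonneg
    -- Triangle 2 : c₁ 0 → c₂ s → c₂ 0 → c₁ 0
    obtain ⟨q, hq, hqd⟩ := hhyp σ (fun r => c₂ (s - r)) τ D s Dτ hD0 hs0 hDτ0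
        hσ (reverse_segment (fun a ha b hb => h₂ a b ha.1 hb.1)) hτ
        (by simp only [sub_zero]; rw [hσD]) (by simp only [sub_self]; rw [hτ0])
        (by rw [hτD, hσ0]) r' hr'mem
    have key : dist (c₁ t) q ≤ 2 * δ := by
      have h4 := dist_triangle (c₁ t) (σ r') q
      have : σ r' = σ (D - r) := by rw [hr'def]
      rw [this] at h4
      linarith
    rcases hq with ⟨u, hu, rfl⟩ | ⟨v, hv, rfl⟩
    · -- q = c₂ (s - u)
      simp only at key hqd
      set u' := s - u with hu'def
      have hu'0 : 0 ≤ u' := by simp only [hu'def]; linarith [hu.2]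
      have h5 : dist (c₂ 0) (c₂ u') = u' := by
        rw [h₂ 0 u' le_rfl hu'0, abs_sub_comm, abs_of_nonneg (by simpa using hu'0), sub_zero]
      -- u' ≤ d₀ + t + 2δ
      have h6 : dist (c₂ 0) (c₁ t) ≤ d₀ + t := by
        have := dist_triangle (c₂ 0) (c₁ 0) (c₁ t)
        have h7 : dist (c₁ 0) (c₁ t) = t := by
          rw [h₁ 0 t le_rfl ht, abs_sub_comm, abs_of_nonneg (by simpa using ht), sub_zero]
        rw [dist_comm (c₂ 0) (c₁ 0)] at this
        linarith
      have hub : u' ≤ d₀ + t + 2 * δ := by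
        have := dist_triangle (c₂ 0) (c₁ t) (c₂ u')
        rw [h5] at this
        linarith
      -- u' ≥ t - 2δ - d₀
      have hlb : t - 2 * δ - d₀ ≤ u' := by
        have ha := dist_triangle (c₁ 0) (c₂ u') (c₁ t)
        have hb' := dist_triangle (c₁ 0) (c₂ 0) (c₂ u')
        have h7 : dist (c₁ 0) (c₁ t) = t := by
          rw [h₁ 0 t le_rfl ht, abs_sub_comm, abs_of_nonneg (by simpa using ht), sub_zero]
        rw [h7] at ha
        rw [h5] at hb'
        rw [dist_comm (c₂ u') (c₁ t)] at ha
        linarith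
      have h8 : dist (c₂ u') (c₂ t) = |u' - t| := h₂ u' t hu'0 ht
      have h9 : |u' - t| ≤ 2 * δ + d₀ := by
        rw [abs_le]; constructor <;> linarith
      have := dist_triangle (c₁ t) (c₂ u') (c₂ t)
      rw [h8] at this
      linarith
    · -- q = τ v on segment from c₂ 0 to c₁ 0
      have h5 : dist (c₂ 0) (τ v) = v := by
        rw [← hτ0, hτ 0 ⟨le_rfl, hDτ0⟩ v hv, abs_sub_comm, abs_of_nonneg (by simpa using hv.1), sub_zero]
      have h6 : dist (τ v) (c₁ 0) = Dτ - v := by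
        rw [← hτD, hτ v hv Dτ ⟨hDτ0, le_rfl⟩, abs_of_nonpos (by linarith [hv.2]), neg_sub]
      have h7 : dist (c₁ 0) (c₁ t) = t := by
        rw [h₁ 0 t le_rfl ht, abs_sub_comm, abs_of_nonneg (by simpa using ht), sub_zero]
      have h8 : dist (c₂ 0) (c₂ t) = t := by
        rw [h₂ 0 t le_rfl ht, abs_sub_comm, abs_of_nonneg (by simpa using ht), sub_zero]
      have hv2 : v ≤ d₀ := hDτd ▸ hv.2
      have ht' : t ≤ d₀ + 2 * δ := by
        have h9 := dist_triangle (c₁ 0) (τ v) (c₁ t)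
        rw [h7, dist_comm (τ v) (c₁ t), dist_comm (c₁ 0) (τ v), h6] at h9
        linarith [hv.1, key]
      have hstep := dist_triangle (c₁ t) (τ v) (c₂ 0)
      rw [dist_comm (τ v) (c₂ 0), h5] at hstep
      have hfin := dist_triangle (c₁ t) (c₂ 0) (c₂ t)
      rw [h8] at hfin
      linarith
end

section
/- Let δ ≥ 0 and let X be a proper δ-hyperbolic geodesic metric space. If c₁, c₂ : [0,∞) → X are geodesic rays with c₁(0) = c₂(0) which are not asymptotic, then there exists a geodesic line γ : ℝ → X such that the ray t ↦ γ(−t) (t ≥ 0) is asymptotic to c₁ and the ray t ↦ γ(t) (t ≥ 0) is asymptotic to c₂. -/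
/-- A geodesic line: an isometric map `c : ℝ → X`. -/
def IsGeodesicLine {X : Type*} [MetricSpace X] (c : ℝ → X) : Prop :=
  ∀ s t : ℝ, dist (c s) (c t) = |s - t|

/-- A cluster point of a sequence lies in every closed set that the sequence eventually
inhabits. -/
lemma clusterPt_mem_of_eventually {Y : Type*} [TopologicalSpace Y] {g : ℕ → Y} {x : Y}
    (hx : ClusterPt x (Filter.map g Filter.atTop)) {C : Set Y} (hC : IsClosed C) {N : ℕ}
    (h : ∀ n ≥ N, g n ∈ C) : x ∈ C := by
  have h1 : Filter.map g Filter.atTop ≤ Filter.principal C :=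
    Filter.le_principal_iff.2 (Filter.mem_map.2 (Filter.eventually_atTop.2 ⟨N, h⟩))
  have h2 := hx.mono h1
  exact hC.closure_eq ▸ mem_closure_iff_clusterPt.2 h2

/-- Key estimate: a point on a geodesic from `r₁ n` to `r₂ n` that sits at parameter-distance
`t` beyond a point near the common origin (on the `r₂` side) is within `K + 2δ` of `r₂ t`. -/
lemma ray_side_bound {X : Type*} [MetricSpace X] {δ K n L a t : ℝ}
    (hhyp : DeltaHyperbolic X δ)
    {r₁ r₂ : ℝ → X} (hr₁ : IsGeodesicRay r₁) (hr₂ : IsGeodesicRay r₂)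
    (h0 : r₁ 0 = r₂ 0)
    {σ : ℝ → X} (hσ : IsGeodesicSegment σ L) (hσ0 : σ 0 = r₁ n) (hσL : σ L = r₂ n)
    (ha : a ∈ Set.Icc 0 L) (hK : dist (r₁ 0) (σ a) ≤ K)
    (han : n - K ≤ a) (hLa : n - K ≤ L - a)
    (ht : t ∈ Set.Icc 0 (n - K)) :
    dist (σ (a + t)) (r₂ t) ≤ K + 2*δ := by
  obtain ⟨ht0, htn⟩ := ht
  obtain ⟨ha0, haL⟩ := ha
  have hK0 : 0 ≤ K := dist_nonneg.trans hK
  have hn0 : 0 ≤ n := by linarith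
  have hL0 : 0 ≤ L := le_trans ha0 haL
  have hu : a + t ∈ Set.Icc (0:ℝ) L := ⟨by linarith, by linarith⟩
  have dau : dist (σ a) (σ (a + t)) = t := by
    rw [hσ a ⟨ha0, haL⟩ (a + t) hu, show a - (a + t) = -t by ring, abs_neg, abs_of_nonneg ht0]
  have dx_le : dist (r₁ 0) (σ (a + t)) ≤ K + t := by
    have := dist_triangle (r₁ 0) (σ a) (σ (a + t))
    linarith [this, dau]
  have dx_ge : t - K ≤ dist (r₁ 0) (σ (a + t)) := by
    have h3 : dist (σ a) (σ (a + t)) ≤ dist (σ a) (r₁ 0) + dist (r₁ 0) (σ (a + t)) :=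
      dist_triangle _ _ _
    rw [dau, dist_comm (σ a) (r₁ 0)] at h3
    linarith
  have hrev : IsGeodesicSegment (fun w => r₂ (n - w)) n := by
    intro s hs u hu2
    rw [hr₂ (n - s) (n - u) (by linarith [hs.2]) (by linarith [hu2.2]), abs_sub_comm]
    congr 1; ring
  have hr₁seg : IsGeodesicSegment r₁ n := fun s hs u hu2 => hr₁ s u hs.1 hu2.1
  obtain ⟨p, hp, hdp⟩ := hhyp σ (fun w => r₂ (n - w)) r₁ L n n hL0 hn0 hn0 hσ hrev hr₁seg
    (by rw [hσL]; norm_num)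
    (by show r₂ (n - n) = r₁ 0; rw [sub_self, ← h0])
    hσ0.symm (a + t) hu
  rcases hp with ⟨w, hw, rfl⟩ | ⟨v, hv, rfl⟩
  · -- p = r₂ (n - w)
    have hv0 : (0:ℝ) ≤ n - w := by linarith [hw.2]
    have dxv : dist (r₁ 0) (r₂ (n - w)) = n - w := by
      rw [h0, hr₂ 0 (n - w) le_rfl hv0, abs_of_nonpos (by linarith), neg_sub]
      ring
    have tri1 := dist_triangle (r₁ 0) (σ (a + t)) (r₂ (n - w))
    have tri2 := dist_triangle (r₁ 0) (r₂ (n - w)) (σ (a + t))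
    rw [dist_comm (r₂ (n - w)) (σ (a + t))] at tri2
    have dvt : dist (r₂ (n - w)) (r₂ t) = |n - w - t| := hr₂ _ _ hv0 ht0
    have habs : |n - w - t| ≤ K + δ := abs_le.2 ⟨by linarith, by linarith⟩
    have final := dist_triangle (σ (a + t)) (r₂ (n - w)) (r₂ t)
    linarith [dvt ▸ final]
  · -- p = r₁ v
    have d1 : dist (σ (a + t)) (r₁ n) = a + t := by
      rw [← hσ0, hσ (a + t) hu 0 ⟨le_rfl, hL0⟩, sub_zero, abs_of_nonneg (by linarith)]
    have d2 : dist (r₁ v) (r₁ n) = n - v := by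
      rw [hr₁ v n hv.1 hn0, abs_of_nonpos (by linarith [hv.2]), neg_sub]
    have tri := dist_triangle (σ (a + t)) (r₁ v) (r₁ n)
    have hvK : v ≤ K + δ - t := by linarith
    have d3 : dist (r₁ v) (r₂ t) ≤ v + t := by
      have t1 := dist_triangle (r₁ v) (r₁ 0) (r₂ t)
      have e1 : dist (r₁ v) (r₁ 0) = v := by
        rw [hr₁ v 0 hv.1 le_rfl, sub_zero, abs_of_nonneg hv.1]
      have e2 : dist (r₁ 0) (r₂ t) = t := by
        rw [h0, hr₂ 0 t le_rfl ht0, abs_of_nonpos (by linarith), neg_sub, sub_zero]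
      linarith
    have final := dist_triangle (σ (a + t)) (r₁ v) (r₂ t)
    linarith

theorem exists_line_connecting_nonasymptotic_rays
    {X : Type*} [MetricSpace X] [ProperSpace X] (δ : ℝ) (hδ : 0 ≤ δ)
    (hgeo : IsGeodesicSpace X) (hhyp : DeltaHyperbolic X δ)
    (c₁ c₂ : ℝ → X) (h₁ : IsGeodesicRay c₁) (h₂ : IsGeodesicRay c₂)
    (h0 : c₁ 0 = c₂ 0) (hna : ¬ AsymptoticRays c₁ c₂) :
    ∃ γ : ℝ → X, IsGeodesicLine γ ∧
      AsymptoticRays (fun t => γ (-t)) c₁ ∧ AsymptoticRays (fun t => γ t) c₂ := by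
  classical
  -- choose geodesics σ n from c₁ n to c₂ n
  have hσex : ∀ n : ℕ, ∃ c : ℝ → X, IsGeodesicSegment c (dist (c₁ n) (c₂ n)) ∧
      c 0 = c₁ n ∧ c (dist (c₁ n) (c₂ n)) = c₂ n := fun n => hgeo (c₁ n) (c₂ n)
  choose σ hσ hσ0 hσL using hσex
  let L : ℕ → ℝ := fun n => dist (c₁ (n:ℝ)) (c₂ (n:ℝ))
  have hσseg : ∀ n, IsGeodesicSegment (σ n) (L n) := hσ
  have hσL' : ∀ n, σ n (L n) = c₂ (n:ℝ) := hσL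
  have hL0 : ∀ n, 0 ≤ L n := fun n => dist_nonneg
  -- distances to the origin along the rays
  have hd₁ : ∀ s : ℝ, 0 ≤ s → dist (c₁ 0) (c₁ s) = s := by
    intro s hs
    rw [h₁ 0 s le_rfl hs, abs_of_nonpos (by linarith), neg_sub, sub_zero]
  have hd₂ : ∀ s : ℝ, 0 ≤ s → dist (c₁ 0) (c₂ s) = s := by
    intro s hs
    rw [h0, h₂ 0 s le_rfl hs, abs_of_nonpos (by linarith), neg_sub, sub_zero]
  -- Step 1: the geodesics σ n pass uniformly close to the origin
  have hKex : ∃ K : ℝ, ∀ n : ℕ, ∃ b ∈ Set.Icc (0:ℝ) (L n), dist (c₁ 0) (σ n b) ≤ K := by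
    by_contra hcon
    push_neg at hcon
    apply hna
    refine ⟨2*δ, fun s hs => ?_⟩
    obtain ⟨n, hn⟩ := hcon (s + δ + 1)
    have hnbig : s + δ + 1 < (n:ℝ) := by
      have := hn 0 ⟨le_rfl, hL0 n⟩
      rwa [hσ0, hd₁ _ (Nat.cast_nonneg n)] at this
    have hn0 : (0:ℝ) ≤ n := Nat.cast_nonneg n
    have hrev : IsGeodesicSegment (fun w => c₂ ((n:ℝ) - w)) n := by
      intro u hu v hv
      rw [h₂ ((n:ℝ) - u) ((n:ℝ) - v) (by linarith [hu.2]) (by linarith [hv.2]), abs_sub_comm]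
      congr 1; ring
    have hc₁seg : IsGeodesicSegment c₁ n := fun u hu v hv => h₁ u v hu.1 hv.1
    obtain ⟨p, hp, hdp⟩ := hhyp c₁ (σ n) (fun w => c₂ ((n:ℝ) - w)) n (L n) n
      hn0 (hL0 n) hn0 hc₁seg (hσseg n) hrev
      (hσ0 n).symm (by rw [hσL']; norm_num)
      (by show c₂ ((n:ℝ) - n) = c₁ 0; rw [sub_self, ← h0])
      s ⟨hs, by linarith⟩
    rcases hp with ⟨b, hb, rfl⟩ | ⟨w, hw, rfl⟩
    · exfalso
      have h1 := hn b hb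
      have tri := dist_triangle (c₁ 0) (c₁ s) (σ n b)
      rw [hd₁ s hs] at tri
      linarith
    · have hv0 : (0:ℝ) ≤ (n:ℝ) - w := by linarith [hw.2]
      have dxv : dist (c₁ 0) (c₂ ((n:ℝ) - w)) = (n:ℝ) - w := hd₂ _ hv0
      have tri1 := dist_triangle (c₁ 0) (c₁ s) (c₂ ((n:ℝ) - w))
      have tri2 := dist_triangle (c₁ 0) (c₂ ((n:ℝ) - w)) (c₁ s)
      rw [dist_comm (c₂ ((n:ℝ) - w)) (c₁ s)] at tri2
      rw [hd₁ s hs] at tri1 tri2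
      have habs : |(n:ℝ) - w - s| ≤ δ := abs_le.2 ⟨by linarith, by linarith⟩
      have dvt : dist (c₂ ((n:ℝ) - w)) (c₂ s) = |(n:ℝ) - w - s| := h₂ _ _ hv0 hs
      have final := dist_triangle (c₁ s) (c₂ ((n:ℝ) - w)) (c₂ s)
      linarith [dvt ▸ final]
  obtain ⟨K, hK⟩ := hKex
  choose a ha hKa using hK
  have hK0 : 0 ≤ K := dist_nonneg.trans (hKa 0)
  -- parameter bounds
  have han : ∀ n : ℕ, (n:ℝ) - K ≤ a n := by
    intro n
    have d1 : dist (σ n (a n)) (c₁ (n:ℝ)) = a n := by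
      rw [← hσ0 n, hσseg n (a n) (ha n) 0 ⟨le_rfl, hL0 n⟩, sub_zero, abs_of_nonneg (ha n).1]
    have tri : (n:ℝ) ≤ dist (c₁ 0) (σ n (a n)) + dist (σ n (a n)) (c₁ (n:ℝ)) := by
      have := dist_triangle (c₁ 0) (σ n (a n)) (c₁ (n:ℝ))
      rwa [hd₁ _ (Nat.cast_nonneg n)] at this
    rw [d1] at tri
    linarith [hKa n]
  have hLan : ∀ n : ℕ, (n:ℝ) - K ≤ L n - a n := by
    intro n
    have d1 : dist (σ n (a n)) (c₂ (n:ℝ)) = L n - a n := by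
      rw [← hσL' n, hσseg n (a n) (ha n) (L n) ⟨hL0 n, le_rfl⟩,
        abs_of_nonpos (by linarith [(ha n).2]), neg_sub]
    have tri : (n:ℝ) ≤ dist (c₁ 0) (σ n (a n)) + dist (σ n (a n)) (c₂ (n:ℝ)) := by
      have := dist_triangle (c₁ 0) (σ n (a n)) (c₂ (n:ℝ))
      rwa [hd₂ _ (Nat.cast_nonneg n)] at this
    rw [d1] at tri
    linarith [hKa n]
  -- the approximating lines, obtained by recentering σ n at a n and clamping
  let g : ℕ → ℝ → X := fun n t => σ n (min (max (a n + t) 0) (L n))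
  have hg_mem : ∀ (n : ℕ) (t : ℝ), |t| ≤ (n:ℝ) - K →
      (a n + t) ∈ Set.Icc (0:ℝ) (L n) ∧ g n t = σ n (a n + t) := by
    intro n t htn
    have h1 := abs_le.1 htn
    have hmem : (a n + t) ∈ Set.Icc (0:ℝ) (L n) :=
      ⟨by linarith [han n, h1.1], by linarith [hLan n, h1.2]⟩
    refine ⟨hmem, ?_⟩
    show σ n (min (max (a n + t) 0) (L n)) = σ n (a n + t)
    rw [max_eq_left hmem.1, min_eq_left hmem.2]
  -- each g n t lies in a fixed compact ball
  have hg_ball : ∀ (n : ℕ) (t : ℝ), g n t ∈ Metric.closedBall (c₁ 0) (K + |t|) := by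
    intro n t
    have hclamp : |a n - min (max (a n + t) 0) (L n)| ≤ |t| := by
      rcases le_total (a n + t) 0 with h | h
      · rw [max_eq_right h, min_eq_left (hL0 n)]
        have : t ≤ 0 := by linarith [(ha n).1]
        rw [sub_zero, abs_of_nonneg (ha n).1, abs_of_nonpos this]
        linarith
      · rcases le_total (L n) (a n + t) with h2 | h2
        · rw [max_eq_left h, min_eq_right h2]
          have ht0 : 0 ≤ t := by linarith [(ha n).2]
          rw [abs_of_nonpos (by linarith [(ha n).2]), abs_of_nonneg ht0]
          linarith [(ha n).2]
        · rw [max_eq_left h, min_eq_left h2]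
          rw [show a n - (a n + t) = -t by ring, abs_neg]
    have hdist : dist (σ n (a n)) (g n t) ≤ |t| := by
      show dist (σ n (a n)) (σ n (min (max (a n + t) 0) (L n))) ≤ |t|
      have hmem : min (max (a n + t) 0) (L n) ∈ Set.Icc (0:ℝ) (L n) :=
        ⟨le_min (le_max_right _ _) (hL0 n), min_le_right _ _⟩
      rw [hσseg n (a n) (ha n) _ hmem]
      exact hclamp
    have := dist_triangle (c₁ 0) (σ n (a n)) (g n t)
    simp only [Metric.mem_closedBall, dist_comm (g n t) (c₁ 0)]
    linarith [hKa n]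
  -- extract a cluster point in the product of closed balls
  have hS : IsCompact (Set.pi Set.univ fun t : ℝ => Metric.closedBall (c₁ 0) (K + |t|)) :=
    isCompact_univ_pi fun t => isCompact_closedBall _ _
  have hgS : ∀ n, g n ∈ Set.pi Set.univ fun t : ℝ => Metric.closedBall (c₁ 0) (K + |t|) := by
    intro n
    rw [Set.mem_univ_pi]
    exact fun t => hg_ball n t
  obtain ⟨γ, hγS, hγcl⟩ := hS.exists_clusterPt (f := Filter.map g Filter.atTop)
    (Filter.le_principal_iff.2 (Filter.mem_map.2 (Filter.Eventually.of_forall hgS)))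
  refine ⟨γ, ?_, ?_, ?_⟩
  · -- geodesic line
    intro s t
    obtain ⟨N, hN⟩ := exists_nat_ge (K + |s| + |t|)
    refine clusterPt_mem_of_eventually (N := N) hγcl
      (C := {f : ℝ → X | dist (f s) (f t) = |s - t|})
      (isClosed_eq (((continuous_apply s).dist (continuous_apply t))) continuous_const) ?_
    intro n hn
    have hNn : (N:ℝ) ≤ n := Nat.cast_le.2 hn
    have hs' : |s| ≤ (n:ℝ) - K := by
      have := abs_nonneg t
      linarith [abs_nonneg s]
    have ht' : |t| ≤ (n:ℝ) - K := by
      have := abs_nonneg s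
      linarith [abs_nonneg t]
    obtain ⟨hms, hgs⟩ := hg_mem n s hs'
    obtain ⟨hmt, hgt⟩ := hg_mem n t ht'
    show dist (g n s) (g n t) = |s - t|
    rw [hgs, hgt, hσseg n _ hms _ hmt]
    congr 1; ring
  · -- asymptotic to c₁ in the negative direction
    refine ⟨K + 2*δ, fun t ht => ?_⟩
    obtain ⟨N, hN⟩ := exists_nat_ge (K + t)
    refine clusterPt_mem_of_eventually (N := N) hγcl
      (C := {f : ℝ → X | dist (f (-t)) (c₁ t) ≤ K + 2*δ})
      (isClosed_le ((continuous_apply (-t)).dist continuous_const) continuous_const) ?_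
    intro n hn
    have hNn : (N:ℝ) ≤ n := Nat.cast_le.2 hn
    have ht' : |(-t)| ≤ (n:ℝ) - K := by
      rw [abs_neg, abs_of_nonneg ht]; linarith
    obtain ⟨hmem, hgeq⟩ := hg_mem n (-t) ht'
    show dist (g n (-t)) (c₁ t) ≤ K + 2*δ
    rw [hgeq]
    -- apply the key estimate to the reversed geodesic
    have hrevseg : IsGeodesicSegment (fun u => σ n (L n - u)) (L n) := by
      intro u hu v hv
      rw [hσseg n (L n - u) ⟨by linarith [hu.2], by linarith [hu.1]⟩
        (L n - v) ⟨by linarith [hv.2], by linarith [hv.1]⟩, abs_sub_comm]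
      congr 1; ring
    have key := ray_side_bound (K := K) (n := (n:ℝ)) (a := L n - a n) (t := t) hhyp h₂ h₁
      h0.symm hrevseg
      (by show σ n (L n - 0) = c₂ (n:ℝ); rw [sub_zero, hσL'])
      (by show σ n (L n - L n) = c₁ (n:ℝ); rw [sub_self, hσ0])
      ⟨by linarith [(ha n).2], by linarith [(ha n).1]⟩
      (by rw [← h0, show L n - (L n - a n) = a n by ring]; exact hKa n)
      (hLan n) (by rw [show L n - (L n - a n) = a n by ring]; exact han n)
      ⟨ht, by linarith⟩
    rw [show L n - (L n - a n + t) = a n + -t by ring] at key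
    exact key
  · -- asymptotic to c₂ in the positive direction
    refine ⟨K + 2*δ, fun t ht => ?_⟩
    obtain ⟨N, hN⟩ := exists_nat_ge (K + t)
    refine clusterPt_mem_of_eventually (N := N) hγcl
      (C := {f : ℝ → X | dist (f t) (c₂ t) ≤ K + 2*δ})
      (isClosed_le ((continuous_apply t).dist continuous_const) continuous_const) ?_
    intro n hn
    have hNn : (N:ℝ) ≤ n := Nat.cast_le.2 hn
    have ht' : |t| ≤ (n:ℝ) - K := by
      rw [abs_of_nonneg ht]; linarith
    obtain ⟨hmem, hgeq⟩ := hg_mem n t ht'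
    show dist (g n t) (c₂ t) ≤ K + 2*δ
    rw [hgeq]
    exact ray_side_bound (K := K) (n := (n:ℝ)) hhyp h₁ h₂ h0 (hσseg n) (hσ0 n) (hσL' n)
      (ha n) (hKa n) (han n) (hLan n) ⟨ht, by linarith⟩
end

section
/- Let X₁ and X₂ be geodesic metric spaces and let f : X₁ → X₂ be a quasi-isometry, i.e. there are constants λ ≥ 1, α ≥ 0, C ≥ 0 such that (1/λ)·d(x,y) − α ≤ d(f(x), f(y)) ≤ λ·d(x,y) + α for all x,y ∈ X₁ and every point of X₂ lies within distance C of the image f(X₁). Then X₁ is δ₁-hyperbolic for some δ₁ ≥ 0 if and only if X₂ is δ₂-hyperbolic for some δ₂ ≥ 0. -/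
/-!
A quasi-isometry `f` has a quasi-inverse `g` (send `z` to any `x` with `f x` within `C` of `z`),
which is again a quasi-isometric embedding, so both directions reduce to: a quasi-isometric
embedding `f : X → Y` into a hyperbolic geodesic space pulls hyperbolicity back. The image under
`f` of a geodesic triangle of `X` is a triangle of quasi-geodesics, and by the stability of
quasi-geodesics (Morse lemma) each side is uniformly Hausdorff-close to a geodesic of `Y` with the
same ends; thinness of that geodesic triangle transfers back through `f`.

Quasi-geodesics need not be continuous, so the Morse lemma runs through discrete chains: in a
`δ`-hyperbolic space a geodesic stays within `6 δ √N + K` of any chain of `N` steps of length at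
most `K` joining its ends (halve the chain and use one thin triangle). At a point of the geodesic
farthest from the quasi-geodesic, at distance `D`, a detour along the quasi-geodesic of length
linear in `D` avoids the `D`-ball around that point, so `D ≤ 6 δ √(a D + b) + c`, which bounds `D`.
Conversely, sampling the geodesic at unit steps and picking nearby points of the quasi-geodesic
gives parameters running from `0` to `T` with bounded jumps, and these pass near every parameter.
-/

open Set Metric

theorem six_sqrt_half_add_one_le_six_sqrt {N : ℕ} (hN : 2 ≤ N) :
    6 * √(((N : ℝ) + 1) / 2) + 1 ≤ 6 * √N := by
  have hN' : (2 : ℝ) ≤ N := by exact_mod_cast hN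
  have hs := Real.mul_self_sqrt (show (0 : ℝ) ≤ N by linarith)
  have hu := Real.mul_self_sqrt (show (0 : ℝ) ≤ ((N : ℝ) + 1) / 2 by linarith)
  nlinarith [Real.sqrt_nonneg (N : ℝ), Real.sqrt_nonneg (((N : ℝ) + 1) / 2),
    sq_nonneg (√(N : ℝ) - √(((N : ℝ) + 1) / 2)), sq_nonneg (√(N : ℝ) - 1.4),
    sq_nonneg (6 * √(N : ℝ) - 6 * √(((N : ℝ) + 1) / 2) - 1)]

theorem le_add_of_le_mul_sqrt_add {k c a b D : ℝ} (hk : 0 ≤ k) (hc : 0 ≤ c) (ha : 0 ≤ a)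
    (hb : 0 ≤ b) (h : D ≤ k * √(a * D + b) + c) :
    D ≤ c + k ^ 2 * a + k * √(a * c + b) := by
  set g := √(a * c + b)
  by_contra! hlt
  have hg : 0 ≤ k * g := by positivity
  have hy : k ^ 2 * a + k * g < D - c := by linarith
  have hy0 : 0 < D - c := by nlinarith
  have hs := Real.sq_sqrt (show 0 ≤ a * D + b by nlinarith)
  have hg2 := Real.sq_sqrt (show 0 ≤ a * c + b by positivity)
  have h₁ := mul_self_le_mul_self hy0.le (show D - c ≤ k * √(a * D + b) by linarith)
  have h₂ := mul_lt_mul_of_pos_left hy hy0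
  have h₃ := mul_le_mul_of_nonneg_left (show k * g ≤ D - c by nlinarith) hg
  nlinarith

theorem abs_min_succ_sub_min_le_one (k : ℕ) (L : ℝ) :
    |min ((k + 1 : ℕ) : ℝ) L - min (k : ℝ) L| ≤ 1 := by
  refine (abs_min_sub_min_le_max _ _ _ _).trans ?_
  simp

theorem exists_abs_sub_le_of_abs_sub_succ_le {w : ℕ → ℝ} {M t : ℝ} (hM : 0 ≤ M) (N : ℕ)
    (hw : ∀ k < N, |w (k + 1) - w k| ≤ M) (h0 : w 0 ≤ t) (hN : t ≤ w N) :
    ∃ k ≤ N, |t - w k| ≤ M := by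
  induction N with
  | zero => exact ⟨0, le_rfl, by rw [le_antisymm hN h0, sub_self, abs_zero]; exact hM⟩
  | succ N ih =>
    by_cases htN : t ≤ w N
    · obtain ⟨k, hk, hkM⟩ := ih (fun k hk => hw k (by omega)) htN
      exact ⟨k, by omega, hkM⟩
    · refine ⟨N, by omega, ?_⟩
      rw [abs_of_nonneg (by linarith)]
      linarith [(le_abs_self _).trans (hw N (by omega))]

theorem le_mul_add_of_one_div_mul_sub_le {lam eps d r : ℝ} (hlam : 0 < lam)
    (h : (1 / lam) * d - eps ≤ r) : d ≤ lam * (r + eps) := by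
  rw [one_div, inv_mul_eq_div, sub_le_iff_le_add, div_le_iff₀ hlam] at h
  linarith

theorem sign_mul_add_mem_uIcc {s s' t : ℝ} (ht : t ∈ Icc 0 |s' - s|) :
    s + SignType.sign (s' - s) * t ∈ uIcc s s' := by
  rcases lt_trichotomy s s' with h | rfl | h
  · rw [sign_pos (sub_pos.2 h), abs_of_pos (sub_pos.2 h)] at *
    rw [uIcc_of_le h.le]; constructor <;> simp <;> linarith [ht.1, ht.2]
  · simp
  · rw [sign_neg (sub_neg.2 h), abs_of_neg (sub_neg.2 h)] at *
    rw [uIcc_of_ge h.le]; constructor <;> simp <;> linarith [ht.1, ht.2]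

section ConcatPath

variable {X : Type*} {p₁ p₂ : ℝ → X} {a b : ℝ}

noncomputable def concatPath (p₁ : ℝ → X) (a : ℝ) (p₂ : ℝ → X) : ℝ → X :=
  fun t => if t ≤ a then p₁ t else p₂ (t - a)

theorem concatPath_zero (ha : 0 ≤ a) : concatPath p₁ a p₂ 0 = p₁ 0 := if_pos ha

theorem concatPath_add (hb : 0 ≤ b) (hjoin : p₁ a = p₂ 0) :
    concatPath p₁ a p₂ (a + b) = p₂ b := by
  unfold concatPath
  split_ifs with h
  · rw [show b = 0 by linarith, add_zero, hjoin]
  · rw [add_sub_cancel_left]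

theorem image_concatPath_subset :
    concatPath p₁ a p₂ '' Icc 0 (a + b) ⊆ p₁ '' Icc 0 a ∪ p₂ '' Icc 0 b := by
  rintro _ ⟨t, ht, rfl⟩
  unfold concatPath
  split_ifs with h
  · exact Or.inl ⟨t, ⟨ht.1, h⟩, rfl⟩
  · exact Or.inr ⟨t - a, ⟨by linarith, by linarith [ht.2]⟩, rfl⟩

end ConcatPath

section Hyperbolic

variable {X : Type*} [MetricSpace X] {δ lam eps T a b : ℝ} {p₁ p₂ q : ℝ → X}

def IsCoarseLipschitzPath (K e : ℝ) (p : ℝ → X) (A : ℝ) : Prop :=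
  ∀ s ∈ Icc (0 : ℝ) A, ∀ t ∈ Icc (0 : ℝ) A, dist (p s) (p t) ≤ K * |s - t| + e

def IsQuasiGeodesic (lam eps : ℝ) (q : ℝ → X) (T : ℝ) : Prop :=
  IsCoarseLipschitzPath lam eps q T ∧
    ∀ s ∈ Icc (0 : ℝ) T, ∀ t ∈ Icc (0 : ℝ) T, (1 / lam) * |s - t| - eps ≤ dist (q s) (q t)

theorem IsQuasiGeodesic.abs_sub_le {s t : ℝ} (hq : IsQuasiGeodesic lam eps q T) (hlam : 0 < lam)
    (hs : s ∈ Icc 0 T) (ht : t ∈ Icc 0 T) :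
    |s - t| ≤ lam * (dist (q s) (q t) + eps) :=
  le_mul_add_of_one_div_mul_sub_le hlam (hq.2 s hs t ht)

theorem IsCoarseLipschitzPath.concatPath {K e₁ e₂ : ℝ} (h₁ : IsCoarseLipschitzPath K e₁ p₁ a)
    (h₂ : IsCoarseLipschitzPath K e₂ p₂ b) (he₁ : 0 ≤ e₁) (he₂ : 0 ≤ e₂)
    (hjoin : p₁ a = p₂ 0) : IsCoarseLipschitzPath K (e₁ + e₂) (concatPath p₁ a p₂) (a + b) := by
  intro s hs t ht
  wlog hst : s ≤ t generalizing s t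
  · rw [dist_comm, abs_sub_comm]; exact this t ht s hs (by linarith)
  unfold _root_.concatPath
  by_cases hta : t ≤ a
  · rw [if_pos (hst.trans hta), if_pos hta]
    linarith [h₁ s ⟨hs.1, hst.trans hta⟩ t ⟨ht.1, hta⟩]
  by_cases hsa : s ≤ a
  · rw [if_pos hsa, if_neg hta]
    have d₁ := h₁ s ⟨hs.1, hsa⟩ a ⟨hs.1.trans hsa, le_rfl⟩
    have d₂ := h₂ 0 ⟨le_rfl, by linarith [ht.2]⟩ (t - a) ⟨by linarith, by linarith [ht.2]⟩
    rw [← hjoin, zero_sub, abs_neg, abs_of_nonneg (by linarith)] at d₂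
    rw [abs_of_nonpos (by linarith : s - a ≤ 0)] at d₁
    rw [abs_of_nonpos (by linarith : s - t ≤ 0)]
    linarith [dist_triangle (p₁ s) (p₁ a) (p₂ (t - a))]
  · rw [if_neg hsa, if_neg hta]
    have d := h₂ (s - a) ⟨by linarith, by linarith [hs.2]⟩ (t - a) ⟨by linarith, by linarith [ht.2]⟩
    rw [sub_sub_sub_cancel_right] at d
    linarith

theorem IsCoarseLipschitzPath.segment {K e s s' : ℝ}
    (hq : IsCoarseLipschitzPath K e q T) (hK : 0 ≤ K) (hs : s ∈ Icc 0 T) (hs' : s' ∈ Icc 0 T) :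
    IsCoarseLipschitzPath K e (fun t => q (s + SignType.sign (s' - s) * t)) |s' - s| := by
  intro t ht t' ht'
  refine (hq _ (uIcc_subset_Icc hs hs' (sign_mul_add_mem_uIcc ht)) _
    (uIcc_subset_Icc hs hs' (sign_mul_add_mem_uIcc ht'))).trans ?_
  have hsign : |(SignType.sign (s' - s) : ℝ)| ≤ 1 := by cases SignType.sign (s' - s) <;> simp
  rw [show s + SignType.sign (s' - s) * t - (s + SignType.sign (s' - s) * t')
    = SignType.sign (s' - s) * (t - t') by ring, abs_mul]
  gcongr
  exact mul_le_of_le_one_left (abs_nonneg _) hsign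

namespace IsGeodesicSegment

variable {c : ℝ → X}

theorem dist_start_apply (hc : IsGeodesicSegment c T) {t : ℝ} (ht : t ∈ Icc 0 T) :
    dist (c 0) (c t) = t := by
  rw [hc 0 ⟨le_rfl, ht.1.trans ht.2⟩ t ht, zero_sub, abs_neg, abs_of_nonneg ht.1]

theorem dist_apply_end (hc : IsGeodesicSegment c T) {t : ℝ} (ht : t ∈ Icc 0 T) :
    dist (c t) (c T) = T - t := by
  rw [hc t ht T ⟨ht.1.trans ht.2, le_rfl⟩, abs_sub_comm, abs_of_nonneg (sub_nonneg.2 ht.2)]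

theorem reverse (hc : IsGeodesicSegment c T) : IsGeodesicSegment (fun s => c (T - s)) T := by
  intro s hs t ht
  rw [hc (T - s) ⟨by linarith [hs.2], by linarith [hs.1]⟩ (T - t)
    ⟨by linarith [ht.2], by linarith [ht.1]⟩, abs_sub_comm]
  ring_nf

theorem restrict (hc : IsGeodesicSegment c T) (ha : 0 ≤ a) (hb : b ≤ T) :
    IsGeodesicSegment (fun v => c (a + v)) (b - a) := by
  intro s hs t ht
  rw [hc (a + s) ⟨by linarith [hs.1], by linarith [hs.2]⟩ (a + t)
    ⟨by linarith [ht.1], by linarith [ht.2]⟩]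
  ring_nf

theorem continuousOn (hc : IsGeodesicSegment c T) : ContinuousOn c (Icc 0 T) :=
  (LipschitzOnWith.of_dist_le_mul (K := 1) fun s hs t ht => by
    rw [hc s hs t ht, NNReal.coe_one, one_mul, Real.dist_eq]).continuousOn

theorem isCoarseLipschitzPath (hc : IsGeodesicSegment c T) {K : ℝ} (hK : 1 ≤ K) :
    IsCoarseLipschitzPath K 0 c T := fun s hs t ht => by
  rw [hc s hs t ht, add_zero]
  exact le_mul_of_one_le_left (abs_nonneg _) hK

end IsGeodesicSegment

theorem DeltaHyperbolic.exists_near_of_triangle (hX : DeltaHyperbolic X δ)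
    {c c₁ c₂ : ℝ → X} {T₁ T₂ : ℝ} (hT₁ : 0 ≤ T₁) (hT₂ : 0 ≤ T₂)
    (hc : IsGeodesicSegment c T) (hc₁ : IsGeodesicSegment c₁ T₁) (hc₂ : IsGeodesicSegment c₂ T₂)
    (h₀ : c₁ 0 = c 0) (h₁ : c₁ T₁ = c₂ 0) (h₂ : c₂ T₂ = c T) {t : ℝ} (ht : t ∈ Icc 0 T) :
    (∃ s ∈ Icc 0 T₁, dist (c t) (c₁ s) ≤ δ) ∨ ∃ s ∈ Icc 0 T₂, dist (c t) (c₂ s) ≤ δ := by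
  obtain ⟨p, hp, hdp⟩ := hX c _ _ T T₂ T₁ (ht.1.trans ht.2) hT₂ hT₁ hc hc₂.reverse hc₁.reverse
    (by simp [h₂]) (by simp [h₁]) (by simp [h₀]) t ht
  rcases hp with ⟨s, hs, rfl⟩ | ⟨s, hs, rfl⟩
  · exact Or.inr ⟨T₂ - s, ⟨by linarith [hs.2], by linarith [hs.1]⟩, hdp⟩
  · exact Or.inl ⟨T₁ - s, ⟨by linarith [hs.2], by linarith [hs.1]⟩, hdp⟩

theorem DeltaHyperbolic.exists_dist_le_of_chain (hgeo : IsGeodesicSpace X) (hδ : 0 ≤ δ)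
    (hX : DeltaHyperbolic X δ) {K : ℝ} (hK : 0 ≤ K) (N : ℕ) {x : ℕ → X}
    (hx : ∀ i < N, dist (x i) (x (i + 1)) ≤ K) {c : ℝ → X}
    (hc : IsGeodesicSegment c T) (hc0 : c 0 = x 0) (hcT : c T = x N) :
    ∀ t ∈ Icc 0 T, ∃ i ≤ N, dist (c t) (x i) ≤ 6 * δ * √N + K := by
  induction N using Nat.strong_induction_on generalizing x c T with
  | _ N ih =>
  intro t ht
  rcases Nat.lt_or_ge N 2 with hN | hN
  · have hT : T ≤ K := by
      rw [← hc.dist_start_apply ⟨ht.1.trans ht.2, le_rfl⟩, hc0, hcT]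
      interval_cases N
      · simpa using hK
      · exact hx 0 one_pos
    refine ⟨0, N.zero_le, ?_⟩
    rw [← hc0, dist_comm, hc.dist_start_apply ht]
    nlinarith [Real.sqrt_nonneg (N : ℝ), ht.2]
  set m := (N + 1) / 2
  have hhalf : ∀ M : ℕ, 2 * M ≤ N + 1 → 6 * δ * √M + K + δ ≤ 6 * δ * √N + K := by
    intro M hM
    have hM' : (M : ℝ) ≤ ((N : ℝ) + 1) / 2 := by
      rw [le_div_iff₀ two_pos]; exact_mod_cast (by omega : M * 2 ≤ N + 1)
    nlinarith [Real.sqrt_le_sqrt hM', six_sqrt_half_add_one_le_six_sqrt hN]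
  obtain ⟨c₁, hc₁, hc₁0, hc₁1⟩ := hgeo (x 0) (x m)
  obtain ⟨c₂, hc₂, hc₂0, hc₂1⟩ := hgeo (x m) (x N)
  rcases hX.exists_near_of_triangle dist_nonneg dist_nonneg hc hc₁ hc₂ (hc₁0.trans hc0.symm)
    (hc₁1.trans hc₂0.symm) (hc₂1.trans hcT.symm) ht with ⟨s, hs, hds⟩ | ⟨s, hs, hds⟩
  · obtain ⟨i, hi, hdi⟩ := ih m (by omega) (fun i hi => hx i (by omega)) hc₁ hc₁0 hc₁1 s hs
    exact ⟨i, by omega, by linarith [dist_triangle (c t) (c₁ s) (x i), hhalf m (by omega)]⟩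
  · obtain ⟨i, hi, hdi⟩ := ih (N - m) (by omega) (x := fun i => x (m + i))
      (fun i hi => hx (m + i) (by omega)) hc₂ (by simpa using hc₂0)
      (by rw [hc₂1, Nat.add_sub_cancel' (by omega)]) s hs
    exact ⟨m + i, by omega,
      by linarith [dist_triangle (c t) (c₂ s) (x (m + i)), hhalf (N - m) (by omega)]⟩

theorem DeltaHyperbolic.exists_dist_le_of_coarseLipschitzPath (hgeo : IsGeodesicSpace X)
    (hδ : 0 ≤ δ) (hX : DeltaHyperbolic X δ) {K e A : ℝ} {p : ℝ → X}
    (hp : IsCoarseLipschitzPath K e p A) (hK : 0 ≤ K) (he : 0 ≤ e) (hA : 0 ≤ A)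
    {c : ℝ → X} (hc : IsGeodesicSegment c T) (hc0 : c 0 = p 0) (hcT : c T = p A) :
    ∀ t ∈ Icc 0 T, ∃ s ∈ Icc 0 A, dist (c t) (p s) ≤ 6 * δ * √(A + 1) + (K + e) := by
  intro t ht
  have hmem : ∀ i : ℕ, min (i : ℝ) A ∈ Icc 0 A :=
    fun i => ⟨le_min i.cast_nonneg hA, min_le_right _ _⟩
  have hstep : ∀ i < ⌈A⌉₊, dist (p (min (i : ℝ) A)) (p (min ((i + 1 : ℕ) : ℝ) A)) ≤ K + e := by
    intro i _
    have := hp _ (hmem i) _ (hmem (i + 1))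
    rw [abs_sub_comm] at this
    nlinarith [abs_min_succ_sub_min_le_one i A]
  obtain ⟨i, -, hi⟩ := hX.exists_dist_le_of_chain hgeo hδ (by linarith) ⌈A⌉₊ hstep hc
    (by simpa [min_eq_left hA] using hc0) (by rwa [min_eq_right (Nat.le_ceil A)]) t ht
  refine ⟨_, hmem i, hi.trans ?_⟩
  gcongr
  exact (Nat.ceil_lt_add_one hA).le

theorem exists_mem_near_of_far {Q : Set X} (hQ : Q.Nonempty) {x y : X} {D : ℝ}
    (hy : D ≤ infDist y Q) (hx : infDist x Q ≤ D) (hxy : x ∈ Q ∨ 2 * D + 1 ≤ dist y x) :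
    ∃ z ∈ Q, dist x z ≤ D + 1 ∧ ∀ w, dist x w ≤ dist x z → D ≤ dist y w := by
  rcases hxy with hxQ | hfar
  · refine ⟨x, hxQ, by rw [dist_self]; linarith [hx.trans' infDist_nonneg], fun w hw => ?_⟩
    rw [dist_self, dist_le_zero] at hw
    exact hw ▸ hy.trans (infDist_le_dist_of_mem hxQ)
  · obtain ⟨z, hzQ, hz⟩ := (infDist_lt_iff hQ).1 (hx.trans_lt (lt_add_one D))
    exact ⟨z, hzQ, hz.le, fun w hw => by linarith [dist_triangle y w x, dist_comm x w]⟩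

theorem exists_detour (hgeo : IsGeodesicSpace X) (hq : IsQuasiGeodesic lam eps q T)
    (hlam : 1 ≤ lam) (heps : 0 ≤ eps) (x y : X) {s s' : ℝ} (hs : s ∈ Icc 0 T)
    (hs' : s' ∈ Icc 0 T) :
    ∃ (p : ℝ → X) (A : ℝ), 0 ≤ A ∧ IsCoarseLipschitzPath lam eps p A ∧ p 0 = x ∧ p A = y ∧
      A ≤ dist x (q s) + lam * (dist (q s) (q s') + eps) + dist (q s') y ∧
      p '' Icc 0 A ⊆ closedBall x (dist x (q s)) ∪ q '' Icc 0 T ∪ closedBall y (dist (q s') y) := by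
  obtain ⟨c₁, hc₁, hc₁0, hc₁1⟩ := hgeo x (q s)
  obtain ⟨c₂, hc₂, hc₂0, hc₂1⟩ := hgeo (q s') y
  set mid := fun t => q (s + SignType.sign (s' - s) * t)
  have hjoin₂ : mid |s' - s| = c₂ 0 := by simp [mid, hc₂0]
  have hjoin₁ : c₁ (dist x (q s)) = concatPath mid |s' - s| c₂ 0 := by
    rw [concatPath_zero (abs_nonneg _), hc₁1]; simp [mid]
  refine ⟨concatPath c₁ (dist x (q s)) (concatPath mid |s' - s| c₂),
    dist x (q s) + (|s' - s| + dist (q s') y),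
    by positivity, ?_, by rw [concatPath_zero dist_nonneg, hc₁0], ?_, ?_, ?_⟩
  · simpa using (hc₁.isCoarseLipschitzPath hlam).concatPath
      ((hq.1.segment (by linarith) hs hs').concatPath (hc₂.isCoarseLipschitzPath hlam) heps le_rfl
        hjoin₂) le_rfl (add_nonneg heps le_rfl) hjoin₁
  · rw [concatPath_add (by positivity) hjoin₁, concatPath_add dist_nonneg hjoin₂, hc₂1]
  · have := hq.abs_sub_le (by linarith) hs hs'
    rw [abs_sub_comm] at this
    linarith
  · refine (image_concatPath_subset.trans (union_subset_union_right _
      image_concatPath_subset)).trans ?_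
    rintro _ (⟨t, ht, rfl⟩ | ⟨t, ht, rfl⟩ | ⟨t, ht, rfl⟩)
    · have := hc₁.dist_start_apply ht
      rw [hc₁0] at this
      exact Or.inl (Or.inl (by rw [mem_closedBall, dist_comm, this]; exact ht.2))
    · exact Or.inl (Or.inr ⟨_, uIcc_subset_Icc hs hs' (sign_mul_add_mem_uIcc ht), rfl⟩)
    · have := hc₂.dist_apply_end ht
      rw [hc₂1] at this
      exact Or.inr (by rw [mem_closedBall, this]; linarith [ht.1])

theorem DeltaHyperbolic.infDist_le_of_isMaxOn (hgeo : IsGeodesicSpace X) (hδ : 0 ≤ δ)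
    (hX : DeltaHyperbolic X δ) (hq : IsQuasiGeodesic lam eps q T) (hlam : 1 ≤ lam)
    (heps : 0 ≤ eps) (hT : 0 ≤ T) {γ : ℝ → X} {L u₀ : ℝ} (hγ : IsGeodesicSegment γ L)
    (hγ0 : γ 0 = q 0) (hγL : γ L = q T) (hu₀ : u₀ ∈ Icc 0 L)
    (hmax : IsMaxOn (fun u => infDist (γ u) (q '' Icc 0 T)) (Icc 0 L) u₀) :
    infDist (γ u₀) (q '' Icc 0 T) ≤
      6 * δ * √((2 + 6 * lam) * infDist (γ u₀) (q '' Icc 0 T) + (3 + lam * (4 + eps))) +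
        (lam + eps) := by
  set Q := q '' Icc 0 T
  set D := infDist (γ u₀) Q
  have hQ : Q.Nonempty := ⟨q 0, 0, ⟨le_rfl, hT⟩, rfl⟩
  have hD : 0 ≤ D := infDist_nonneg
  -- `γ a`, `γ b` lie on `q` or `2 D + 1` from `γ u₀`, so points `D + 1` near them stay `D` from it
  set a := max 0 (u₀ - (2 * D + 1))
  set b := min L (u₀ + (2 * D + 1))
  have ha : a ∈ Icc 0 L := ⟨le_max_left _ _, max_le (hu₀.1.trans hu₀.2) (by linarith [hu₀.2])⟩
  have hb : b ∈ Icc 0 L := ⟨le_min (hu₀.1.trans hu₀.2) (by linarith [hu₀.1]), min_le_left _ _⟩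
  have hau : a ≤ u₀ := max_le hu₀.1 (by linarith)
  have hub : u₀ ≤ b := le_min hu₀.2 (by linarith)
  have hdist : ∀ v ∈ Icc 0 L, dist (γ u₀) (γ v) = |u₀ - v| := hγ u₀ hu₀
  obtain ⟨_, ⟨s, hs, rfl⟩, hsa, hfara⟩ := exists_mem_near_of_far hQ le_rfl (hmax ha) (by
    rcases le_total (u₀ - (2 * D + 1)) 0 with h | h
    · left; rw [show a = 0 from max_eq_left h, hγ0]; exact ⟨0, ⟨le_rfl, hT⟩, rfl⟩
    · right; rw [hdist a ha, show a = u₀ - (2 * D + 1) from max_eq_right h, sub_sub_cancel,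
        abs_of_nonneg (by positivity)])
  obtain ⟨_, ⟨s', hs', rfl⟩, hsb, hfarb⟩ := exists_mem_near_of_far hQ le_rfl (hmax hb) (by
    rcases le_total L (u₀ + (2 * D + 1)) with h | h
    · left; rw [show b = L from min_eq_left h, hγL]; exact ⟨T, ⟨hT, le_rfl⟩, rfl⟩
    · right; rw [hdist b hb, show b = u₀ + (2 * D + 1) from min_eq_right h, sub_add_cancel_left,
        abs_neg, abs_of_nonneg (by positivity)])
  obtain ⟨p, A, hA, hp, hp0, hpA, hAle, himg⟩ :=
    exists_detour hgeo hq hlam heps (γ a) (γ b) hs hs'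
  have hfar : ∀ r ∈ Icc 0 A, D ≤ dist (γ u₀) (p r) := by
    intro r hr
    rcases himg ⟨r, hr, rfl⟩ with (h | h) | h
    · exact hfara _ (by rw [dist_comm]; exact h)
    · exact infDist_le_dist_of_mem h
    · exact hfarb _ (by rw [mem_closedBall, dist_comm, dist_comm (q s')] at h; exact h)
  obtain ⟨r, hr, hdr⟩ := hX.exists_dist_le_of_coarseLipschitzPath hgeo hδ hp (by linarith) heps hA
    (hγ.restrict ha.1 hb.2) (by simpa using hp0.symm) (by simpa using hpA.symm) (u₀ - a)
    ⟨by linarith, by linarith⟩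
  rw [add_sub_cancel] at hdr
  have hss' : dist (q s) (q s') ≤ 6 * D + 4 := by
    have hab : dist (γ a) (γ b) ≤ 2 * (2 * D + 1) := by
      rw [hγ a ha b hb, abs_sub_comm, abs_of_nonneg (by linarith)]
      linarith [min_le_right L (u₀ + (2 * D + 1)), le_max_right 0 (u₀ - (2 * D + 1))]
    linarith [dist_triangle4 (q s) (γ a) (γ b) (q s'), dist_comm (q s) (γ a)]
  have hA1 : A + 1 ≤ (2 + 6 * lam) * D + (3 + lam * (4 + eps)) := by
    nlinarith [dist_comm (q s') (γ b)]
  calc D ≤ dist (γ u₀) (p r) := hfar r hr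
    _ ≤ 6 * δ * √(A + 1) + (lam + eps) := hdr
    _ ≤ _ := by gcongr

theorem DeltaHyperbolic.exists_geodesic_near_quasiGeodesic (hgeo : IsGeodesicSpace X)
    (hδ : 0 ≤ δ) (hX : DeltaHyperbolic X δ) (hlam : 1 ≤ lam) (heps : 0 ≤ eps) :
    ∃ R, 0 ≤ R ∧ ∀ (q γ : ℝ → X) (T L : ℝ), 0 ≤ T → IsQuasiGeodesic lam eps q T →
      IsGeodesicSegment γ L → γ 0 = q 0 → γ L = q T →
      ∀ u ∈ Icc 0 L, ∃ s ∈ Icc 0 T, dist (γ u) (q s) ≤ R := by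
  obtain ⟨M, hM0, hM⟩ : ∃ M, 0 ≤ M ∧ ∀ D : ℝ,
      D ≤ 6 * δ * √((2 + 6 * lam) * D + (3 + lam * (4 + eps))) + (lam + eps) → D ≤ M :=
    ⟨_, by positivity, fun D => le_add_of_le_mul_sqrt_add (by positivity) (by positivity)
      (by positivity) (by positivity)⟩
  refine ⟨M + 1, by positivity, fun q γ T L hT hq hγ hγ0 hγL u hu => ?_⟩
  set Q := q '' Icc 0 T
  obtain ⟨u₀, hu₀, hmax⟩ := isCompact_Icc.exists_isMaxOn (nonempty_Icc.2 (hu.1.trans hu.2))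
    ((continuous_infDist_pt Q).comp_continuousOn hγ.continuousOn)
  have hD := hM _ (hX.infDist_le_of_isMaxOn hgeo hδ hq hlam heps hT hγ hγ0 hγL hu₀ hmax)
  have hu' : infDist (γ u) Q ≤ infDist (γ u₀) Q := hmax hu
  have hQ : Q.Nonempty := ⟨q 0, 0, ⟨le_rfl, hT⟩, rfl⟩
  obtain ⟨_, ⟨s, hs, rfl⟩, hds⟩ := (infDist_lt_iff hQ).1
    (show infDist (γ u) Q < M + 1 by linarith)
  exact ⟨s, hs, hds.le⟩

theorem DeltaHyperbolic.exists_quasiGeodesic_near_geodesic (hgeo : IsGeodesicSpace X)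
    (hδ : 0 ≤ δ) (hX : DeltaHyperbolic X δ) (hlam : 1 ≤ lam) (heps : 0 ≤ eps) :
    ∃ R, 0 ≤ R ∧ ∀ (q γ : ℝ → X) (T L : ℝ), IsQuasiGeodesic lam eps q T →
      IsGeodesicSegment γ L → 0 ≤ L → γ 0 = q 0 → γ L = q T →
      ∀ t ∈ Icc 0 T, ∃ u ∈ Icc 0 L, dist (q t) (γ u) ≤ R := by
  obtain ⟨R, hR, hnear⟩ := hX.exists_geodesic_near_quasiGeodesic hgeo hδ hlam heps
  set M := lam * (2 * R + 1 + eps)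
  have hM : 0 ≤ M := by positivity
  refine ⟨lam * M + eps + R, by positivity, fun q γ T L hq hγ hL hγ0 hγL t ht => ?_⟩
  have hT : 0 ≤ T := ht.1.trans ht.2
  -- parameters `w k` of `q` near the samples `γ (u k)`, pinned to `w 0 = 0` and `w N = T`
  set N := ⌈L⌉₊ + 1
  set u : ℕ → ℝ := fun k => min (k : ℝ) L
  have hu : ∀ k, u k ∈ Icc 0 L := fun k => ⟨le_min k.cast_nonneg hL, min_le_right _ _⟩
  choose σ hσ using fun k => hnear q γ T L hT hq hγ hγ0 hγL (u k) (hu k)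
  set w : ℕ → ℝ := fun k => if k = 0 then 0 else if k = N then T else σ k
  have hw0 : w 0 = 0 := if_pos rfl
  have hwN : w N = T := by simp [w, N]
  have hw : ∀ k, w k ∈ Icc 0 T ∧ dist (γ (u k)) (q (w k)) ≤ R := by
    intro k
    by_cases h0 : k = 0
    · rw [h0, hw0, show u 0 = 0 by simp [u, hL], hγ0, dist_self]
      exact ⟨⟨le_rfl, hT⟩, hR⟩
    by_cases hN : k = N
    · rw [hN, hwN, show u N = L from min_eq_right ((Nat.le_ceil L).trans (by simp [N])), hγL,
        dist_self]
      exact ⟨⟨hT, le_rfl⟩, hR⟩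
    · simp only [w, h0, hN, if_false]
      exact hσ k
  have hstep : ∀ k < N, |w (k + 1) - w k| ≤ M := by
    intro k _
    have hγu : dist (γ (u (k + 1))) (γ (u k)) ≤ 1 := by
      rw [hγ _ (hu _) _ (hu _)]; exact abs_min_succ_sub_min_le_one k L
    have := hq.abs_sub_le (by linarith) (hw (k + 1)).1 (hw k).1
    have := dist_triangle4 (q (w (k + 1))) (γ (u (k + 1))) (γ (u k)) (q (w k))
    have := mul_le_mul_of_nonneg_left (show dist (q (w (k + 1))) (q (w k)) + eps ≤ 2 * R + 1 + eps
      by linarith [(hw k).2, (hw (k + 1)).2, dist_comm (q (w (k + 1))) (γ (u (k + 1)))])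
      (by linarith : 0 ≤ lam)
    linarith
  obtain ⟨k, -, hk⟩ := exists_abs_sub_le_of_abs_sub_succ_le hM N hstep (hw0 ▸ ht.1)
    (hwN ▸ ht.2)
  refine ⟨u k, hu k, ?_⟩
  have := hq.1 t ht (w k) (hw k).1
  have := mul_le_mul_of_nonneg_left hk (by linarith : 0 ≤ lam)
  linarith [dist_triangle (q t) (q (w k)) (γ (u k)), dist_comm (q (w k)) (γ (u k)), (hw k).2]

end Hyperbolic

section QuasiIsometry

variable {X Y : Type*} [MetricSpace X] [MetricSpace Y] {lam eps : ℝ} {f : X → Y}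

def IsQuasiIsometricEmbedding (lam eps : ℝ) (f : X → Y) : Prop :=
  ∀ x y, (1 / lam) * dist x y - eps ≤ dist (f x) (f y) ∧ dist (f x) (f y) ≤ lam * dist x y + eps

namespace IsQuasiIsometricEmbedding

theorem dist_le (hf : IsQuasiIsometricEmbedding lam eps f) (hlam : 0 < lam) (x y : X) :
    dist x y ≤ lam * (dist (f x) (f y) + eps) :=
  le_mul_add_of_one_div_mul_sub_le hlam (hf x y).1

theorem isQuasiGeodesic_comp (hf : IsQuasiIsometricEmbedding lam eps f) {c : ℝ → X} {T : ℝ}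
    (hc : IsGeodesicSegment c T) : IsQuasiGeodesic lam eps (f ∘ c) T :=
  ⟨fun s hs t ht => hc s hs t ht ▸ (hf (c s) (c t)).2,
    fun s hs t ht => hc s hs t ht ▸ (hf (c s) (c t)).1⟩

theorem of_coarse_rightInverse (hf : IsQuasiIsometricEmbedding lam eps f) (hlam : 1 ≤ lam)
    (heps : 0 ≤ eps) {C : ℝ} (hC : 0 ≤ C) {g : Y → X} (hg : ∀ z, dist z (f (g z)) ≤ C) :
    IsQuasiIsometricEmbedding lam (lam * (2 * C + eps)) g := by
  intro z z'
  have hz := dist_triangle4 z (f (g z)) (f (g z')) z'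
  have hz' := dist_triangle4 (f (g z)) z z' (f (g z'))
  have hgz := hg z
  have hgz' := hg z'
  rw [dist_comm (f (g z')) z'] at hz
  rw [dist_comm (f (g z)) z] at hz'
  constructor
  · have h := (hf (g z) (g z')).2
    have hinv : 1 / lam ≤ lam := ((div_le_one (by linarith)).2 hlam).trans hlam
    have := mul_le_mul_of_nonneg_right hinv (by positivity : 0 ≤ 2 * C + eps)
    have : (1 / lam) * dist z z' ≤ (1 / lam) * (lam * dist (g z) (g z') + (2 * C + eps)) :=
      mul_le_mul_of_nonneg_left (by linarith) (by positivity)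
    rw [mul_add, ← mul_assoc, one_div_mul_cancel (by linarith), one_mul] at this
    linarith
  · have := hf.dist_le (by linarith) (g z) (g z')
    have := mul_le_mul_of_nonneg_left
      (show dist (f (g z)) (f (g z')) + eps ≤ dist z z' + (2 * C + eps) by linarith)
      (by linarith : 0 ≤ lam)
    linarith

theorem exists_deltaHyperbolic (hf : IsQuasiIsometricEmbedding lam eps f) (hlam : 1 ≤ lam)
    (heps : 0 ≤ eps) (hgeo : IsGeodesicSpace Y) {δ : ℝ} (hδ : 0 ≤ δ)
    (hY : DeltaHyperbolic Y δ) : ∃ δ', 0 ≤ δ' ∧ DeltaHyperbolic X δ' := by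
  obtain ⟨R, hR, hgeod_near⟩ := hY.exists_geodesic_near_quasiGeodesic hgeo hδ hlam heps
  obtain ⟨R', hR', hquasi_near⟩ := hY.exists_quasiGeodesic_near_geodesic hgeo hδ hlam heps
  refine ⟨lam * (R' + δ + R + eps), by positivity, ?_⟩
  intro c₀ c₁ c₂ T₀ T₁ T₂ hT₀ hT₁ hT₂ hc₀ hc₁ hc₂ h₀ h₁ h₂ t ht
  have hσ : ∀ (c : ℝ → X) (T : ℝ), 0 ≤ T → IsGeodesicSegment c T → ∃ σ : ℝ → Y,
      IsGeodesicSegment σ (dist (f (c 0)) (f (c T))) ∧ σ 0 = f (c 0) ∧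
      σ (dist (f (c 0)) (f (c T))) = f (c T) ∧
      (∀ v ∈ Icc 0 (dist (f (c 0)) (f (c T))), ∃ s ∈ Icc 0 T, dist (σ v) (f (c s)) ≤ R) := by
    intro c T hT hc
    obtain ⟨σ, hσ, hσ0, hσ1⟩ := hgeo (f (c 0)) (f (c T))
    exact ⟨σ, hσ, hσ0, hσ1,
      hgeod_near (f ∘ c) σ T _ hT (hf.isQuasiGeodesic_comp hc) hσ hσ0 hσ1⟩
  obtain ⟨σ₀, hσ₀, hσ₀0, hσ₀1, -⟩ := hσ c₀ T₀ hT₀ hc₀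
  obtain ⟨σ₁, hσ₁, hσ₁0, hσ₁1, hσ₁near⟩ := hσ c₁ T₁ hT₁ hc₁
  obtain ⟨σ₂, hσ₂, hσ₂0, hσ₂1, hσ₂near⟩ := hσ c₂ T₂ hT₂ hc₂
  obtain ⟨u, hu, hdu⟩ := hquasi_near (f ∘ c₀) σ₀ T₀ _ (hf.isQuasiGeodesic_comp hc₀) hσ₀
    dist_nonneg hσ₀0 hσ₀1 t ht
  rw [Function.comp_apply] at hdu
  obtain ⟨_, hp, hdp⟩ := hY σ₀ σ₁ σ₂ _ _ _ dist_nonneg dist_nonneg dist_nonneg hσ₀ hσ₁ hσ₂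
    (by rw [hσ₀1, hσ₁0, h₀]) (by rw [hσ₁1, hσ₂0, h₁]) (by rw [hσ₂1, hσ₀0, h₂]) u hu
  have hclose : ∀ y : X, dist (f (c₀ t)) (f y) ≤ R' + δ + R →
      dist (c₀ t) y ≤ lam * (R' + δ + R + eps) := fun y hy => by
    have := hf.dist_le (by linarith) (c₀ t) y
    have : lam * (dist (f (c₀ t)) (f y) + eps) ≤ lam * (R' + δ + R + eps) := by gcongr
    linarith
  rcases hp with ⟨v, hv, rfl⟩ | ⟨v, hv, rfl⟩
  · obtain ⟨s, hs, hds⟩ := hσ₁near v hv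
    exact ⟨c₁ s, Or.inl ⟨s, hs, rfl⟩,
      hclose _ (by linarith [dist_triangle4 (f (c₀ t)) (σ₀ u) (σ₁ v) (f (c₁ s))])⟩
  · obtain ⟨s, hs, hds⟩ := hσ₂near v hv
    exact ⟨c₂ s, Or.inr ⟨s, hs, rfl⟩,
      hclose _ (by linarith [dist_triangle4 (f (c₀ t)) (σ₀ u) (σ₂ v) (f (c₂ s))])⟩

end IsQuasiIsometricEmbedding

end QuasiIsometry

theorem quasi_isometry_preserves_hyperbolicity
    {X₁ X₂ : Type*} [MetricSpace X₁] [MetricSpace X₂]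
    (hgeo₁ : IsGeodesicSpace X₁) (hgeo₂ : IsGeodesicSpace X₂)
    (f : X₁ → X₂) (lam α C : ℝ) (hlam : 1 ≤ lam) (hα : 0 ≤ α) (hC : 0 ≤ C)
    (hqi₁ : ∀ x y : X₁, (1 / lam) * dist x y - α ≤ dist (f x) (f y))
    (hqi₂ : ∀ x y : X₁, dist (f x) (f y) ≤ lam * dist x y + α)
    (hqi₃ : ∀ z : X₂, ∃ x : X₁, dist z (f x) ≤ C) :
    (∃ δ₁ : ℝ, 0 ≤ δ₁ ∧ DeltaHyperbolic X₁ δ₁) ↔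
      (∃ δ₂ : ℝ, 0 ≤ δ₂ ∧ DeltaHyperbolic X₂ δ₂) := by
  have hf : IsQuasiIsometricEmbedding lam α f := fun x y => ⟨hqi₁ x y, hqi₂ x y⟩
  constructor
  · rintro ⟨δ₁, hδ₁, hX₁⟩
    choose g hg using hqi₃
    exact (hf.of_coarse_rightInverse hlam hα hC hg).exists_deltaHyperbolic hlam (by positivity)
      hgeo₁ hδ₁ hX₁
  · rintro ⟨δ₂, hδ₂, hX₂⟩
    exact hf.exists_deltaHyperbolic hlam hα hgeo₂ hδ₂ hX₂
end

section
/- Let δ ≥ 0 and let X be a δ-hyperbolic geodesic metric space. Let c₁ : [0,T₁] → X and c₂ : [0,T₂] → X be geodesic segments, let a, b, c ≥ 0 and s ≥ 0 with s ≤ T₁, s ≤ T₂, T₁ ≤ s + c and T₂ ≤ s + c, and assume d(c₁(0), c₂(0)) ≤ a, d(c₁(T₁), c₂(T₂)) ≤ b, and a ≤ b + 2c. Then d(c₁(s), c₂(s)) ≤ b + 2c, and consequently d(c₁(t), c₂(t)) ≤ 4δ + 3(b + 2c) for all t ∈ [0,s]. -/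
theorem geodesics_close_quantitative
    {X : Type*} [MetricSpace X] (δ : ℝ) (hδ : 0 ≤ δ)
    (hgeo : IsGeodesicSpace X) (hhyp : DeltaHyperbolic X δ)
    (c₁ c₂ : ℝ → X) (T₁ T₂ : ℝ)
    (h₁ : IsGeodesicSegment c₁ T₁) (h₂ : IsGeodesicSegment c₂ T₂)
    (a b c s : ℝ) (ha : 0 ≤ a) (hb : 0 ≤ b) (hc : 0 ≤ c) (hs : 0 ≤ s)
    (hsT₁ : s ≤ T₁) (hsT₂ : s ≤ T₂) (hT₁ : T₁ ≤ s + c) (hT₂ : T₂ ≤ s + c)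
    (hd0 : dist (c₁ 0) (c₂ 0) ≤ a) (hdT : dist (c₁ T₁) (c₂ T₂) ≤ b)
    (hab : a ≤ b + 2 * c) :
    dist (c₁ s) (c₂ s) ≤ b + 2 * c ∧
      ∀ t ∈ Set.Icc (0:ℝ) s, dist (c₁ t) (c₂ t) ≤ 4 * δ + 3 * (b + 2 * c) := by
  -- geodesics: top from c₁ s to c₂ s, diagonal from c₂ s to c₁ 0, bottom from c₁ 0 to c₂ 0
  obtain ⟨top, htop, htop0, htopE⟩ := hgeo (c₁ s) (c₂ s)
  obtain ⟨diag, hdiag, hdiag0, hdiagD⟩ := hgeo (c₂ s) (c₁ 0)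
  obtain ⟨bot, hbot, hbot0, hbotA⟩ := hgeo (c₁ 0) (c₂ 0)
  have hsIcc : s ∈ Set.Icc (0:ℝ) T₁ := ⟨hs, hsT₁⟩
  have hsIcc₂ : s ∈ Set.Icc (0:ℝ) T₂ := ⟨hs, hsT₂⟩
  have key1 : dist (c₁ s) (c₂ s) ≤ b + 2 * c := by
    have e1 : dist (c₁ s) (c₁ T₁) = T₁ - s := by
      rw [h₁ s hsIcc T₁ ⟨le_trans hs hsT₁, le_refl _⟩, abs_of_nonpos (by linarith)]; ring
    have e2 : dist (c₂ T₂) (c₂ s) = T₂ - s := by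
      rw [h₂ T₂ ⟨le_trans hs hsT₂, le_refl _⟩ s hsIcc₂, abs_of_nonneg (by linarith)]
    calc dist (c₁ s) (c₂ s)
        ≤ dist (c₁ s) (c₁ T₁) + dist (c₁ T₁) (c₂ T₂) + dist (c₂ T₂) (c₂ s) :=
          dist_triangle4 _ _ _ _
      _ ≤ (T₁ - s) + b + (T₂ - s) := by rw [e1, e2]; linarith
      _ ≤ b + 2 * c := by linarith
  refine ⟨key1, ?_⟩
  intro t ht
  obtain ⟨ht0, hts⟩ := ht
  -- restrictions of c₁, c₂ to [0,s] are geodesic segments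
  have h₁s : IsGeodesicSegment c₁ s := fun u hu v hv =>
    h₁ u ⟨hu.1, hu.2.trans hsT₁⟩ v ⟨hv.1, hv.2.trans hsT₁⟩
  have h₂s : IsGeodesicSegment c₂ s := fun u hu v hv =>
    h₂ u ⟨hu.1, hu.2.trans hsT₂⟩ v ⟨hv.1, hv.2.trans hsT₂⟩
  have hc1t : dist (c₁ 0) (c₁ t) = t := by
    rw [h₁ 0 ⟨le_refl _, le_trans hs hsT₁⟩ t ⟨ht0, hts.trans hsT₁⟩, abs_of_nonpos (by linarith)]
    ring
  have hc1ts : dist (c₁ t) (c₁ s) = s - t := by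
    rw [h₁ t ⟨ht0, hts.trans hsT₁⟩ s hsIcc, abs_of_nonpos (by linarith)]; ring
  have hc2ts : dist (c₂ s) (c₂ t) = s - t := by
    rw [h₂ s hsIcc₂ t ⟨ht0, hts.trans hsT₂⟩, abs_of_nonneg (by linarith)]
  -- triangle 1: c₁|[0,s], top, diag
  obtain ⟨p, hp, hdp⟩ := hhyp c₁ top diag s (dist (c₁ s) (c₂ s)) (dist (c₂ s) (c₁ 0))
    hs dist_nonneg dist_nonneg h₁s htop hdiag
    (by rw [htop0]) (by rw [htopE, hdiag0]) (by rw [hdiagD]) t ⟨ht0, hts⟩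
  rcases hp with ⟨v, hv, rfl⟩ | ⟨w, hw, rfl⟩
  · -- p on top side
    have hpv : dist (top v) (c₁ s) = v := by
      rw [← htop0, dist_comm, htop 0 ⟨le_refl _, dist_nonneg⟩ v hv, abs_of_nonpos (by linarith [hv.1])]
      ring
    have hst : s - t ≤ δ + (b + 2 * c) := by
      have := dist_triangle (c₁ t) (top v) (c₁ s)
      rw [hpv] at this
      have hvle : v ≤ b + 2 * c := hv.2.trans key1
      linarith [hc1ts ▸ this]
    calc dist (c₁ t) (c₂ t)
        ≤ dist (c₁ t) (c₁ s) + dist (c₁ s) (c₂ s) + dist (c₂ s) (c₂ t) :=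
          dist_triangle4 _ _ _ _
      _ = (s - t) + dist (c₁ s) (c₂ s) + (s - t) := by rw [hc1ts, hc2ts]
      _ ≤ 4 * δ + 3 * (b + 2 * c) := by linarith
  · -- p on diagonal: apply triangle 2: diag, bot, c₂|[0,s]
    obtain ⟨q, hq, hdq⟩ := hhyp diag bot c₂ (dist (c₂ s) (c₁ 0)) (dist (c₁ 0) (c₂ 0)) s
      dist_nonneg dist_nonneg hs hdiag hbot h₂s
      (by rw [hdiagD, hbot0]) (by rw [hbotA]) (by rw [hdiag0]) w hw
    have hdtq : dist (c₁ t) q ≤ 2 * δ :=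
      (dist_triangle (c₁ t) (diag w) q).trans (by linarith)
    rcases hq with ⟨v, hv, rfl⟩ | ⟨u, hu, rfl⟩
    · -- q on bottom side
      have hqv : dist (c₁ 0) (bot v) = v := by
        rw [← hbot0, hbot 0 ⟨le_refl _, dist_nonneg⟩ v hv, abs_of_nonpos (by linarith [hv.1])]
        ring
      have hvle : v ≤ a := hv.2.trans hd0
      have htle : t ≤ a + 2 * δ := by
        have := dist_triangle (c₁ 0) (bot v) (c₁ t)
        rw [hqv, dist_comm (bot v) (c₁ t)] at this
        linarith [hc1t ▸ this]
      calc dist (c₁ t) (c₂ t)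
          ≤ dist (c₁ t) (c₁ 0) + dist (c₁ 0) (c₂ 0) + dist (c₂ 0) (c₂ t) :=
            dist_triangle4 _ _ _ _
        _ ≤ t + a + t := by
            rw [dist_comm (c₁ t) (c₁ 0), hc1t]
            have : dist (c₂ 0) (c₂ t) = t := by
              rw [h₂ 0 ⟨le_refl _, le_trans hs hsT₂⟩ t ⟨ht0, hts.trans hsT₂⟩,
                abs_of_nonpos (by linarith)]; ring
            linarith
        _ ≤ 4 * δ + 3 * (b + 2 * c) := by linarith
    · -- q on c₂ side
      have hc2u : dist (c₂ 0) (c₂ u) = u := by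
        rw [h₂ 0 ⟨le_refl _, le_trans hs hsT₂⟩ u ⟨hu.1, hu.2.trans hsT₂⟩,
          abs_of_nonpos (by linarith [hu.1])]; ring
      have hc2ut : dist (c₂ u) (c₂ t) = |u - t| :=
        h₂ u ⟨hu.1, hu.2.trans hsT₂⟩ t ⟨ht0, hts.trans hsT₂⟩
      have h1 : t ≤ a + u + 2 * δ := by
        have := dist_triangle4 (c₁ 0) (c₂ 0) (c₂ u) (c₁ t)
        rw [dist_comm (c₂ u) (c₁ t)] at this
        linarith [hc1t ▸ this, hc2u ▸ le_refl (dist (c₂ 0) (c₂ u))]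
      have h2' : u ≤ a + t + 2 * δ := by
        have := dist_triangle4 (c₂ 0) (c₁ 0) (c₁ t) (c₂ u)
        rw [dist_comm (c₂ 0) (c₁ 0)] at this
        nlinarith [hc2u, hc1t, hd0, hdtq, dist_comm (c₁ t) (c₂ u)]
      have habs : |u - t| ≤ a + 2 * δ := abs_sub_le_iff.mpr ⟨by linarith, by linarith⟩
      calc dist (c₁ t) (c₂ t)
          ≤ dist (c₁ t) (c₂ u) + dist (c₂ u) (c₂ t) := dist_triangle _ _ _
        _ ≤ 2 * δ + (a + 2 * δ) := by rw [hc2ut]; linarith [dist_comm (c₁ t) (c₂ u) ▸ hdtq]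
        _ ≤ 4 * δ + 3 * (b + 2 * c) := by linarith
end
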